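/- arXiv:1902.07113 — 6 statements merged into one kernel-verified Lean document; each statement's English description precedes it below -/
import Mathlib

section
/- Take α = 2/Δt. For every pair W = (w,v) with w : ℝ² → ℝ differentiable, ∇w square-integrable on Ω, the trace x ↦ w(x,1) square-integrable on (0,1), and v : (0,1) → ℝ square-integrable, the coercivity estimate of the time-discrete monolithic form is sharp: B_m(W,W) = |||W|||²_m, where |||W|||²_m = ‖∇w‖²_Ω + (2/(g·Δt²))·‖w‖²_Γ + (g/2)·‖v‖²_Γ. -/
open MeasureTheory Real Set

noncomputable section

/-- The computational domain `Ω = (0,1) × (0,1) ⊂ ℝ²`. -/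
def Om : Set (ℝ × ℝ) := Ioo (0:ℝ) 1 ×ˢ Ioo (0:ℝ) 1

/-- Partial derivative in the horizontal direction `x`. -/
def pdx (w : ℝ × ℝ → ℝ) (p : ℝ × ℝ) : ℝ := fderiv ℝ w p (1, 0)

/-- Partial derivative in the vertical direction `z`. -/
def pdz (w : ℝ × ℝ → ℝ) (p : ℝ × ℝ) : ℝ := fderiv ℝ w p (0, 1)

/-- Interior inner product `(∇w, ∇φ)_Ω = ∫_Ω ∇w·∇φ`. -/
def ipOm (w φ : ℝ × ℝ → ℝ) : ℝ := ∫ p in Om, (pdx w p * pdx φ p + pdz w p * pdz φ p)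

/-- Free-surface inner product `(a, b)_Γ = ∫₀¹ a(x) b(x) dx`. -/
def ipGa (a b : ℝ → ℝ) : ℝ := ∫ x in Ioo (0:ℝ) 1, a x * b x

/-- The trace of `w : ℝ² → ℝ` on the free surface `Γ` (the top edge `z = 1`). -/
def tr (w : ℝ × ℝ → ℝ) : ℝ → ℝ := fun x => w (x, 1)

/-- The gradient of `w` is square-integrable on `Ω`. -/
def GradL2 (w : ℝ × ℝ → ℝ) : Prop :=
  MemLp (pdx w) 2 (volume.restrict Om) ∧ MemLp (pdz w) 2 (volume.restrict Om)

/-- The trace of `w` on the free surface is square-integrable on `(0,1)`. -/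
def TraceL2 (w : ℝ × ℝ → ℝ) : Prop :=
  MemLp (tr w) 2 (volume.restrict (Ioo (0:ℝ) 1))

/-- A boundary function `v : (0,1) → ℝ` is square-integrable. -/
def BdryL2 (v : ℝ → ℝ) : Prop :=
  MemLp v 2 (volume.restrict (Ioo (0:ℝ) 1))

/-- The time-discrete monolithic bilinear form with parameter `α`:
`B_m(W,Φ) = (∇w,∇φ)_Ω − (2/Δt)(w,η)_Γ + (1/2)(v + (α/g)w, (2/Δt)φ + gη)_Γ`. -/
def Bm (g Δt α : ℝ) (w : ℝ × ℝ → ℝ) (v : ℝ → ℝ) (φ : ℝ × ℝ → ℝ) (η : ℝ → ℝ) : ℝ :=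
  ipOm w φ - (2 / Δt) * ipGa (tr w) η
    + (1 / 2) * ipGa (fun x => v x + (α / g) * tr w x)
        (fun x => (2 / Δt) * tr φ x + g * η x)

/-- The squared monolithic norm `|||W|||²_m = ‖∇w‖²_Ω + (2/(gΔt²))‖w‖²_Γ + (g/2)‖v‖²_Γ`. -/
def nmM2 (g Δt : ℝ) (w : ℝ × ℝ → ℝ) (v : ℝ → ℝ) : ℝ :=
  ipOm w w + (2 / (g * Δt ^ 2)) * ipGa (tr w) (tr w) + (g / 2) * ipGa v v

/-! With `α = 2/Δt`, expanding the last product of `B_m(W,W)` produces the cross term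
`(4/Δt)(w,v)_Γ`, half of which cancels `−(2/Δt)(w,v)_Γ` exactly; the remaining boundary terms are
those of `|||W|||²_m`. Square integrability of `w|_Γ` and `v` is what lets the boundary integral
split linearly. -/

lemma ipGa_linear_combination {a b : ℝ → ℝ} (ha : BdryL2 a) (hb : BdryL2 b) (c d e : ℝ) :
    ipGa (fun x => b x + c * a x) (fun x => d * a x + e * b x)
      = (d + c * e) * ipGa a b + c * d * ipGa a a + e * ipGa b b := by
  have hab : Integrable (fun x => a x * b x) (volume.restrict (Ioo (0:ℝ) 1)) :=
    ha.integrable_mul hb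
  have haa : Integrable (fun x => a x * a x) (volume.restrict (Ioo (0:ℝ) 1)) :=
    ha.integrable_mul ha
  have hbb : Integrable (fun x => b x * b x) (volume.restrict (Ioo (0:ℝ) 1)) :=
    hb.integrable_mul hb
  have hab_aa : Integrable (fun x => (d + c * e) * (a x * b x) + c * d * (a x * a x))
      (volume.restrict (Ioo (0:ℝ) 1)) :=
    (hab.const_mul _).add (haa.const_mul _)
  calc ipGa (fun x => b x + c * a x) (fun x => d * a x + e * b x)
      = ∫ x in Ioo (0:ℝ) 1,
          ((d + c * e) * (a x * b x) + c * d * (a x * a x)) + e * (b x * b x) := by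
        unfold ipGa; congr 1; ext x; ring
    _ = (d + c * e) * ipGa a b + c * d * ipGa a a + e * ipGa b b := by
        rw [integral_add hab_aa (hbb.const_mul _), integral_add (hab.const_mul _) (haa.const_mul _),
          integral_const_mul, integral_const_mul, integral_const_mul]
        rfl

theorem monolithic_form_sharp_coercivity_general
    (g Δt : ℝ) (hg : 0 < g) (hΔt : 0 < Δt)
    (w : ℝ × ℝ → ℝ) (v : ℝ → ℝ)
    (htw : TraceL2 w) (hv : BdryL2 v) :
    Bm g Δt (2 / Δt) w v w v = nmM2 g Δt w v := by
  unfold Bm nmM2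
  rw [ipGa_linear_combination htw hv]
  field_simp
  ring

/-- For `α = 2/Δt` the coercivity estimate of the time-discrete monolithic form is
sharp: `B_m(W,W) = |||W|||²_m`. -/
theorem monolithic_form_sharp_coercivity
    (g Δt : ℝ) (hg : 0 < g) (hΔt : 0 < Δt)
    (w : ℝ × ℝ → ℝ) (v : ℝ → ℝ)
    (hw : Differentiable ℝ w) (hgw : GradL2 w) (htw : TraceL2 w) (hv : BdryL2 v) :
    Bm g Δt (2 / Δt) w v w v = nmM2 g Δt w v :=
  monolithic_form_sharp_coercivity_general g Δt hg hΔt w v htw hv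
end
end

section
/- Take α = 2/Δt. For all pairs W = (w,v) and Φ = (φ,η) with w, φ : ℝ² → ℝ differentiable, ∇w, ∇φ square-integrable on Ω, traces x ↦ w(x,1), x ↦ φ(x,1) square-integrable on (0,1), and v, η : (0,1) → ℝ square-integrable, the time-discrete monolithic bilinear form is bounded with constant 2: B_m(W,Φ) ≤ 2·|||W|||_m·|||Φ|||_m, where |||W|||²_m = ‖∇w‖²_Ω + (2/(g·Δt²))·‖w‖²_Γ + (g/2)·‖v‖²_Γ. -/
open MeasureTheory Real Set

noncomputable section

/-!
With `α = 2/Δt` the expansion of `B_m` has the surface terms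
`c (w,φ)_Γ + (1/Δt)(v,φ)_Γ - (1/Δt)(w,η)_Γ + (g/2)(v,η)_Γ`, `c = 2/(gΔt²)`, and the coupling
coefficient `1/Δt` has modulus exactly `√c·√(g/2)`, the product of the weights of `‖w‖_Γ` and
`‖v‖_Γ` in the norm. Cauchy–Schwarz on each term therefore bounds `B_m(W,Φ)` by `x·Ay` with
`A = [[1,0,0],[0,1,1],[0,1,1]]`, and `x·Ay ≤ 2‖x‖‖y‖` since `‖A‖ = 2`.
-/

open scoped InnerProductSpace

lemma mul_add_mul_le_sqrt_mul_sqrt (a b c d : ℝ) :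
    a * c + b * d ≤ √(a ^ 2 + b ^ 2) * √(c ^ 2 + d ^ 2) := by
  simpa [Fin.sum_univ_two] using Real.sum_mul_le_sqrt_mul_sqrt Finset.univ ![a, b] ![c, d]

lemma mul_add_mul_add_le_two_mul_sqrt_mul_sqrt (a₁ a₂ a₃ b₁ b₂ b₃ : ℝ) :
    a₁ * b₁ + (a₂ + a₃) * (b₂ + b₃) ≤
      2 * √(a₁ ^ 2 + a₂ ^ 2 + a₃ ^ 2) * √(b₁ ^ 2 + b₂ ^ 2 + b₃ ^ 2) := by
  calc a₁ * b₁ + (a₂ + a₃) * (b₂ + b₃)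
      ≤ √(a₁ ^ 2 + (a₂ + a₃) ^ 2) * √(b₁ ^ 2 + (b₂ + b₃) ^ 2) :=
        mul_add_mul_le_sqrt_mul_sqrt _ _ _ _
    _ ≤ √(2 * (a₁ ^ 2 + a₂ ^ 2 + a₃ ^ 2)) * √(2 * (b₁ ^ 2 + b₂ ^ 2 + b₃ ^ 2)) := by
        gcongr <;> nlinarith [sq_nonneg a₁, sq_nonneg b₁, sq_nonneg (a₂ - a₃), sq_nonneg (b₂ - b₃)]
    _ = 2 * √(a₁ ^ 2 + a₂ ^ 2 + a₃ ^ 2) * √(b₁ ^ 2 + b₂ ^ 2 + b₃ ^ 2) := by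
        rw [Real.sqrt_mul zero_le_two, Real.sqrt_mul zero_le_two]
        linear_combination (√(a₁ ^ 2 + a₂ ^ 2 + a₃ ^ 2) * √(b₁ ^ 2 + b₂ ^ 2 + b₃ ^ 2)) *
          Real.sq_sqrt zero_le_two

section InnerProductSpace

variable {E : Type*} [NormedAddCommGroup E] [InnerProductSpace ℝ E]

lemma mul_real_inner_le (k : ℝ) (x y : E) : k * ⟪x, y⟫_ℝ ≤ |k| * (‖x‖ * ‖y‖) :=
  calc k * ⟪x, y⟫_ℝ ≤ |k * ⟪x, y⟫_ℝ| := le_abs_self _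
    _ = |k| * |⟪x, y⟫_ℝ| := abs_mul _ _
    _ ≤ |k| * (‖x‖ * ‖y‖) := by gcongr; exact abs_real_inner_le_norm x y

lemma surface_form_le {g Δt : ℝ} (hg : 0 < g) (hΔt : Δt ≠ 0) (w v φ η : E) :
    -(2 / Δt) * ⟪w, η⟫_ℝ + 1 / 2 * ⟪v + ((2 / Δt) / g) • w, (2 / Δt) • φ + g • η⟫_ℝ ≤
      (√(2 / (g * Δt ^ 2)) * ‖w‖ + √(g / 2) * ‖v‖) *
        (√(2 / (g * Δt ^ 2)) * ‖φ‖ + √(g / 2) * ‖η‖) := by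
  set c := 2 / (g * Δt ^ 2)
  have hc : 0 ≤ c := by positivity
  have hg2 : 0 ≤ g / 2 := by positivity
  have expand : -(2 / Δt) * ⟪w, η⟫_ℝ + 1 / 2 * ⟪v + ((2 / Δt) / g) • w, (2 / Δt) • φ + g • η⟫_ℝ
      = c * ⟪w, φ⟫_ℝ + 1 / Δt * ⟪v, φ⟫_ℝ + -(1 / Δt) * ⟪w, η⟫_ℝ + g / 2 * ⟪v, η⟫_ℝ := by
    simp only [inner_add_left, inner_add_right, real_inner_smul_left, real_inner_smul_right, c]
    field_simp
    ring
  have coeff : √c * √(g / 2) = |1 / Δt| := by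
    rw [← Real.sqrt_mul hc, ← Real.sqrt_sq_eq_abs]
    congr 1
    simp only [c]
    field_simp
  clear_value c
  calc -(2 / Δt) * ⟪w, η⟫_ℝ + 1 / 2 * ⟪v + ((2 / Δt) / g) • w, (2 / Δt) • φ + g • η⟫_ℝ
      = c * ⟪w, φ⟫_ℝ + 1 / Δt * ⟪v, φ⟫_ℝ + -(1 / Δt) * ⟪w, η⟫_ℝ + g / 2 * ⟪v, η⟫_ℝ := expand
    _ ≤ |c| * (‖w‖ * ‖φ‖) + |1 / Δt| * (‖v‖ * ‖φ‖) + |-(1 / Δt)| * (‖w‖ * ‖η‖)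
          + |g / 2| * (‖v‖ * ‖η‖) := by
          gcongr ?_ + ?_ + ?_ + ?_ <;> exact mul_real_inner_le _ _ _
    _ = (√c * ‖w‖ + √(g / 2) * ‖v‖) * (√c * ‖φ‖ + √(g / 2) * ‖η‖) := by
        rw [abs_neg, ← coeff, abs_of_nonneg hc, abs_of_nonneg hg2]
        linear_combination -(‖w‖ * ‖φ‖) * Real.sq_sqrt hc - (‖v‖ * ‖η‖) * Real.sq_sqrt hg2

end InnerProductSpace

section L2

variable {X : Type*} [MeasurableSpace X] {μ : Measure X}

lemma integral_mul_eq_inner_toLp {f h : X → ℝ} (hf : MemLp f 2 μ) (hh : MemLp h 2 μ) :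
    ∫ x, f x * h x ∂μ = ⟪hf.toLp f, hh.toLp h⟫_ℝ := by
  rw [L2.inner_def]
  refine integral_congr_ae ?_
  filter_upwards [hf.coeFn_toLp, hh.coeFn_toLp] with x hfx hhx
  simp [hfx, hhx, mul_comm]

end L2

lemma ipOm_eq_inner_add_inner {w φ : ℝ × ℝ → ℝ} (hw : GradL2 w) (hφ : GradL2 φ) :
    ipOm w φ =
      ⟪hw.1.toLp (pdx w), hφ.1.toLp (pdx φ)⟫_ℝ + ⟪hw.2.toLp (pdz w), hφ.2.toLp (pdz φ)⟫_ℝ := by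
  have hx : Integrable (fun p => pdx w p * pdx φ p) (volume.restrict Om) :=
    hw.1.integrable_mul hφ.1
  have hz : Integrable (fun p => pdz w p * pdz φ p) (volume.restrict Om) :=
    hw.2.integrable_mul hφ.2
  rw [ipOm, integral_add hx hz]
  exact congrArg₂ (· + ·) (integral_mul_eq_inner_toLp _ _) (integral_mul_eq_inner_toLp _ _)

lemma ipOm_self_eq {w : ℝ × ℝ → ℝ} (hw : GradL2 w) :
    ipOm w w = ‖hw.1.toLp (pdx w)‖ ^ 2 + ‖hw.2.toLp (pdz w)‖ ^ 2 := by
  rw [ipOm_eq_inner_add_inner hw hw, real_inner_self_eq_norm_sq, real_inner_self_eq_norm_sq]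

lemma ipOm_self_nonneg {w : ℝ × ℝ → ℝ} (hw : GradL2 w) : 0 ≤ ipOm w w := by
  rw [ipOm_self_eq hw]
  positivity

lemma ipOm_le_sqrt_mul_sqrt {w φ : ℝ × ℝ → ℝ} (hw : GradL2 w) (hφ : GradL2 φ) :
    ipOm w φ ≤ √(ipOm w w) * √(ipOm φ φ) := by
  rw [ipOm_eq_inner_add_inner hw hφ, ipOm_self_eq hw, ipOm_self_eq hφ]
  exact (add_le_add (real_inner_le_norm _ _) (real_inner_le_norm _ _)).trans
    (mul_add_mul_le_sqrt_mul_sqrt _ _ _ _)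

lemma Bm_eq_ipOm_add {g Δt α : ℝ} {w φ : ℝ × ℝ → ℝ} {v η : ℝ → ℝ}
    (htw : TraceL2 w) (hv : BdryL2 v) (htφ : TraceL2 φ) (hη : BdryL2 η) :
    Bm g Δt α w v φ η = ipOm w φ +
      (-(2 / Δt) * ⟪MemLp.toLp (tr w) htw, MemLp.toLp η hη⟫_ℝ +
        1 / 2 * ⟪MemLp.toLp v hv + (α / g) • MemLp.toLp (tr w) htw,
          (2 / Δt) • MemLp.toLp (tr φ) htφ + g • MemLp.toLp η hη⟫_ℝ) := by
  have h := integral_mul_eq_inner_toLp (hv.add (htw.const_smul (α / g)))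
    ((htφ.const_smul (2 / Δt)).add (hη.const_smul g))
  simp only [Pi.add_apply, Pi.smul_apply, smul_eq_mul] at h
  rw [Bm, ipGa, ipGa, integral_mul_eq_inner_toLp htw hη, h, sub_eq_add_neg, add_assoc, neg_mul]
  -- `MemLp.toLp` commutes with `+` and `•` definitionally (`MemLp.toLp_add`, `toLp_const_smul`)
  rfl

lemma nmM2_eq_sum_sq {g : ℝ} (hg : 0 ≤ g) (Δt : ℝ) {w : ℝ × ℝ → ℝ} {v : ℝ → ℝ}
    (hw : GradL2 w) (htw : TraceL2 w) (hv : BdryL2 v) :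
    nmM2 g Δt w v = √(ipOm w w) ^ 2 + (√(2 / (g * Δt ^ 2)) * ‖MemLp.toLp (tr w) htw‖) ^ 2
      + (√(g / 2) * ‖MemLp.toLp v hv‖) ^ 2 := by
  rw [mul_pow, mul_pow, Real.sq_sqrt (ipOm_self_nonneg hw), Real.sq_sqrt (by positivity),
    Real.sq_sqrt (by positivity), ← real_inner_self_eq_norm_sq, ← real_inner_self_eq_norm_sq,
    nmM2, ipGa, ipGa, integral_mul_eq_inner_toLp htw htw, integral_mul_eq_inner_toLp hv hv]

theorem monolithic_form_boundedness_general
    (g Δt : ℝ) (hg : 0 < g) (hΔt : 0 < Δt)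
    (w φ : ℝ × ℝ → ℝ) (v η : ℝ → ℝ)
    (hgw : GradL2 w) (hgφ : GradL2 φ)
    (htw : TraceL2 w) (htφ : TraceL2 φ)
    (hv : BdryL2 v) (hη : BdryL2 η) :
    Bm g Δt (2 / Δt) w v φ η ≤
      2 * Real.sqrt (nmM2 g Δt w v) * Real.sqrt (nmM2 g Δt φ η) := by
  rw [Bm_eq_ipOm_add htw hv htφ hη, nmM2_eq_sum_sq hg.le Δt hgw htw hv,
    nmM2_eq_sum_sq hg.le Δt hgφ htφ hη]
  exact (add_le_add (ipOm_le_sqrt_mul_sqrt hgw hgφ) (surface_form_le hg hΔt.ne' _ _ _ _)).trans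
    (mul_add_mul_add_le_two_mul_sqrt_mul_sqrt _ _ _ _ _ _)

/-- For `α = 2/Δt` the time-discrete monolithic form is bounded with constant 2:
`B_m(W,Φ) ≤ 2·|||W|||_m·|||Φ|||_m`. -/
theorem monolithic_form_boundedness
    (g Δt : ℝ) (hg : 0 < g) (hΔt : 0 < Δt)
    (w φ : ℝ × ℝ → ℝ) (v η : ℝ → ℝ)
    (hw : Differentiable ℝ w) (hφ : Differentiable ℝ φ)
    (hgw : GradL2 w) (hgφ : GradL2 φ)
    (htw : TraceL2 w) (htφ : TraceL2 φ)
    (hv : BdryL2 v) (hη : BdryL2 η) :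
    Bm g Δt (2 / Δt) w v φ η ≤
      2 * Real.sqrt (nmM2 g Δt w v) * Real.sqrt (nmM2 g Δt φ η) :=
  monolithic_form_boundedness_general g Δt hg hΔt w φ v η hgw hgφ htw htφ hv hη
end
end

section
/- Let H be a real inner product space, let g, Δt > 0 be real numbers, and take α = 2/Δt. For all pairs W = (w,v) and Φ = (φ,η) in H × H, the time-discrete segregated free-surface form B_fs(W,Φ) = (2/Δt)·⟨w,φ⟩ + g·⟨w,η⟩ + (g²·Δt/2)·⟨v,η⟩ is bounded: B_fs(W,Φ) ≤ (1 + √5)·|||W|||_s·|||Φ|||_s, where |||(w,v)|||²_s = (1/Δt)·‖w‖² + (g²·Δt/4)·‖v‖². -/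
open scoped RealInnerProductSpace

lemma key_scalar (a b c d : ℝ) (ha : 0 ≤ a) (hb : 0 ≤ b) (hc : 0 ≤ c) (hd : 0 ≤ d) :
    2*a*c + 2*a*d + 2*b*d ≤ (1 + Real.sqrt 5) * (Real.sqrt (a^2+b^2) * Real.sqrt (c^2+d^2)) := by
  have hs : Real.sqrt 5 ^ 2 = 5 := Real.sq_sqrt (by norm_num)
  have hs2 : (2:ℝ) ≤ Real.sqrt 5 := by
    nlinarith [Real.sqrt_nonneg 5, hs]
  have hmul : Real.sqrt (a^2+b^2) * Real.sqrt (c^2+d^2)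
      = Real.sqrt ((a^2+b^2) * (c^2+d^2)) :=
    (Real.sqrt_mul (by positivity) _).symm
  rw [hmul]
  have hsq : (2*a*c + 2*a*d + 2*b*d)^2 ≤ (1 + Real.sqrt 5)^2 * ((a^2+b^2)*(c^2+d^2)) := by
    set s := Real.sqrt 5 with hsdef
    have cauchy : (2*a*c + 2*a*d + 2*b*d)^2 ≤ (a^2+b^2) * ((2*c+2*d)^2 + (2*d)^2) := by
      nlinarith [sq_nonneg (a*(2*d) - b*(2*c+2*d))]
    have h2 : (2*c+2*d)^2 + (2*d)^2 ≤ (6 + 2*s) * (c^2+d^2) := by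
      nlinarith [sq_nonneg (2*c - (s-1)*d), hs2, hs, mul_nonneg (sub_nonneg.mpr hs2) (sq_nonneg (2*c - (s-1)*d))]
    calc (2*a*c + 2*a*d + 2*b*d)^2 ≤ (a^2+b^2) * ((2*c+2*d)^2 + (2*d)^2) := cauchy
      _ ≤ (a^2+b^2) * ((6 + 2*s) * (c^2+d^2)) := by
          apply mul_le_mul_of_nonneg_left h2 (by positivity)
      _ = (1 + s)^2 * ((a^2+b^2)*(c^2+d^2)) := by
          have h6 : (6:ℝ) + 2*s = (1+s)^2 := by nlinarith [hs]
          rw [← h6]; ring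
  have hL : 0 ≤ 2*a*c + 2*a*d + 2*b*d := by positivity
  have h1s : (0:ℝ) ≤ 1 + Real.sqrt 5 := by positivity
  calc 2*a*c + 2*a*d + 2*b*d = Real.sqrt ((2*a*c + 2*a*d + 2*b*d)^2) := (Real.sqrt_sq hL).symm
    _ ≤ Real.sqrt ((1 + Real.sqrt 5)^2 * ((a^2+b^2)*(c^2+d^2))) := Real.sqrt_le_sqrt hsq
    _ = (1 + Real.sqrt 5) * Real.sqrt ((a^2+b^2)*(c^2+d^2)) := by
        rw [Real.sqrt_mul (by positivity), Real.sqrt_sq h1s]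

/-- For `α = 2/Δt` the time-discrete segregated free-surface form is bounded with
constant `1 + √5`: `B_fs(W,Φ) ≤ (1 + √5)·|||W|||_s·|||Φ|||_s`. -/
theorem segregated_form_boundedness
    {H : Type*} [NormedAddCommGroup H] [InnerProductSpace ℝ H]
    (g Δt : ℝ) (hg : 0 < g) (hΔt : 0 < Δt)
    (w v φ η : H) :
    (2 / Δt) * ⟪w, φ⟫ + g * ⟪w, η⟫ + (g ^ 2 * Δt / 2) * ⟪v, η⟫ ≤
      (1 + Real.sqrt 5) *
        Real.sqrt ((1 / Δt) * ‖w‖ ^ 2 + (g ^ 2 * Δt / 4) * ‖v‖ ^ 2) *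
        Real.sqrt ((1 / Δt) * ‖φ‖ ^ 2 + (g ^ 2 * Δt / 4) * ‖η‖ ^ 2) := by
  have hs : 0 < Real.sqrt Δt := Real.sqrt_pos.mpr hΔt
  set s := Real.sqrt Δt with hsdef
  have hs2 : s ^ 2 = Δt := Real.sq_sqrt hΔt.le
  set a := ‖w‖ / s with hadef
  set b := g * s / 2 * ‖v‖ with hbdef
  set c := ‖φ‖ / s with hcdef
  set d := g * s / 2 * ‖η‖ with hddef
  have ha : 0 ≤ a := by positivity
  have hb : 0 ≤ b := by positivity
  have hc : 0 ≤ c := by positivity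
  have hd : 0 ≤ d := by positivity
  have key := key_scalar a b c d ha hb hc hd
  have e1 : a^2 + b^2 = (1 / Δt) * ‖w‖ ^ 2 + (g ^ 2 * Δt / 4) * ‖v‖ ^ 2 := by
    rw [hadef, hbdef, show Δt = s^2 from hs2.symm]
    field_simp
    ring
  have e2 : c^2 + d^2 = (1 / Δt) * ‖φ‖ ^ 2 + (g ^ 2 * Δt / 4) * ‖η‖ ^ 2 := by
    rw [hcdef, hddef, show Δt = s^2 from hs2.symm]
    field_simp
    ring
  have i1 : ⟪w, φ⟫ ≤ ‖w‖ * ‖φ‖ := real_inner_le_norm w φ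
  have i2 : ⟪w, η⟫ ≤ ‖w‖ * ‖η‖ := real_inner_le_norm w η
  have i3 : ⟪v, η⟫ ≤ ‖v‖ * ‖η‖ := real_inner_le_norm v η
  have eL : 2*a*c + 2*a*d + 2*b*d
      = (2 / Δt) * (‖w‖ * ‖φ‖) + g * (‖w‖ * ‖η‖) + (g ^ 2 * Δt / 2) * (‖v‖ * ‖η‖) := by
    rw [hadef, hbdef, hcdef, hddef, show Δt = s^2 from hs2.symm]
    field_simp
  calc (2 / Δt) * ⟪w, φ⟫ + g * ⟪w, η⟫ + (g ^ 2 * Δt / 2) * ⟪v, η⟫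
      ≤ (2 / Δt) * (‖w‖ * ‖φ‖) + g * (‖w‖ * ‖η‖) + (g ^ 2 * Δt / 2) * (‖v‖ * ‖η‖) := by
        gcongr <;> positivity
    _ = 2*a*c + 2*a*d + 2*b*d := eL.symm
    _ ≤ (1 + Real.sqrt 5) * (Real.sqrt (a^2+b^2) * Real.sqrt (c^2+d^2)) := key
    _ = (1 + Real.sqrt 5) *
        Real.sqrt ((1 / Δt) * ‖w‖ ^ 2 + (g ^ 2 * Δt / 4) * ‖v‖ ^ 2) *
        Real.sqrt ((1 / Δt) * ‖φ‖ ^ 2 + (g ^ 2 * Δt / 4) * ‖η‖ ^ 2) := by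
        rw [e1, e2, mul_assoc]
end

section
/- Let H be a real inner product space, let g, Δt > 0 be real numbers, and take α = 2/Δt. Let V^h be a linear subspace of H × H. Suppose Φ = (φ,η) and Φʰ = (φʰ,ηʰ) are pairs in H × H with Φʰ ∈ V^h satisfying Galerkin orthogonality B_fs(Wʰ, Φ − Φʰ) = 0 for every Wʰ ∈ V^h, where B_fs((w,v),(φ,η)) = (2/Δt)·⟨w,φ⟩ + g·⟨w,η⟩ + (g²·Δt/2)·⟨v,η⟩. Then |||Φ − Φʰ|||_s ≤ (1 + √5)·|||Φ − Wʰ|||_s for every Wʰ ∈ V^h, where |||(w,v)|||²_s = (1/Δt)·‖w‖² + (g²·Δt/4)·‖v‖² (quasi-optimality of the segregated free-surface formulation). -/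
/-!
Céa's argument. Galerkin orthogonality gives `B(E, E) = B(Φ − Wʰ, E)` for the error
`E = Φ − Φʰ`. Completing the square, `B(W, W) = |||W|||²_s + ‖w + (gΔt/2) v‖² / Δt`, so `B` is
coercive. In the rescaled coordinates `(‖w‖/√Δt, |g|√Δt‖v‖/2)` of the energy norm, `B` is
dominated by `2·xᵀ S y` with the shear `S = [[1, 1], [0, 1]]`, whose operator norm is the golden
ratio `φ`; hence `B` is bounded with constant `2φ = 1 + √5`.
-/

open scoped RealInnerProductSpace goldenRatio

theorem LinearMap.BilinForm.cea_quasi_optimality {X : Type*} [AddCommGroup X] [Module ℝ X]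
    (B : LinearMap.BilinForm ℝ X) (N : X → ℝ) {C : ℝ} (hC : 0 ≤ C) (hN : ∀ x, 0 ≤ N x)
    (hcoer : ∀ x, N x ^ 2 ≤ B x x) (hbdd : ∀ x y, B x y ≤ C * N x * N y)
    {V : Submodule ℝ X} {u uh : X} (huh : uh ∈ V) (hGal : ∀ w ∈ V, B w (u - uh) = 0) :
    ∀ w ∈ V, N (u - uh) ≤ C * N (u - w) := by
  intro w hw
  have hB : B (u - uh) (u - uh) = B (u - w) (u - uh) := by
    rw [← add_zero (B (u - w) (u - uh)), ← hGal _ (V.sub_mem hw huh),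
      ← LinearMap.BilinForm.add_left, sub_add_sub_cancel]
  have hsq : N (u - uh) ^ 2 ≤ C * N (u - w) * N (u - uh) :=
    (hcoer _).trans (hB ▸ hbdd _ _)
  rcases (hN (u - uh)).eq_or_lt with h0 | hpos
  · rw [← h0]
    exact mul_nonneg hC (hN _)
  · exact le_of_mul_le_mul_right (by rwa [← sq]) hpos

-- The operator norm of the shear `[[1, 1], [0, 1]]` is the golden ratio.
theorem mul_add_mul_add_mul_le_goldenRatio_mul (a b c d : ℝ) :
    c * a + c * b + d * b ≤ φ * (√(c ^ 2 + d ^ 2) * √(a ^ 2 + b ^ 2)) := by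
  have hφ : 0 < φ - 1 := sub_pos.2 Real.one_lt_goldenRatio
  have hcs : (c * a + (c + d) * b) ^ 2 ≤ (c ^ 2 + (c + d) ^ 2) * (a ^ 2 + b ^ 2) := by
    nlinarith [sq_nonneg (c * b - (c + d) * a)]
  -- `φ (φ − 1) = 1` makes the quadratic form `φ² (c² + d²) − c² − (c + d)²` a perfect square.
  have hshear : c ^ 2 + (c + d) ^ 2 ≤ φ ^ 2 * (c ^ 2 + d ^ 2) := by
    have hsquare : φ ^ 2 * (c ^ 2 + d ^ 2) - (c ^ 2 + (c + d) ^ 2) = (φ - 1) * (c - φ * d) ^ 2 := by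
      linear_combination (c ^ 2 + 2 * c * d + (1 - φ) * d ^ 2) * Real.goldenRatio_sq
    linarith [mul_nonneg hφ.le (sq_nonneg (c - φ * d))]
  rw [← Real.sqrt_mul (by positivity), ← Real.sqrt_sq Real.goldenRatio_pos.le,
    ← Real.sqrt_mul (sq_nonneg _)]
  apply Real.le_sqrt_of_sq_le
  calc (c * a + c * b + d * b) ^ 2 = (c * a + (c + d) * b) ^ 2 := by ring
    _ ≤ (c ^ 2 + (c + d) ^ 2) * (a ^ 2 + b ^ 2) := hcs
    _ ≤ φ ^ 2 * (c ^ 2 + d ^ 2) * (a ^ 2 + b ^ 2) := by gcongr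
    _ = φ ^ 2 * ((c ^ 2 + d ^ 2) * (a ^ 2 + b ^ 2)) := by ring

section Segregated

variable {H : Type*} [NormedAddCommGroup H]

noncomputable def segregatedNorm (g Δt : ℝ) (W : H × H) : ℝ :=
  √((1 / Δt) * ‖W.1‖ ^ 2 + (g ^ 2 * Δt / 4) * ‖W.2‖ ^ 2)

theorem sq_segregatedNorm {g Δt : ℝ} (hΔt : 0 ≤ Δt) (W : H × H) :
    segregatedNorm g Δt W ^ 2 = (1 / Δt) * ‖W.1‖ ^ 2 + (g ^ 2 * Δt / 4) * ‖W.2‖ ^ 2 :=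
  Real.sq_sqrt (by positivity)

theorem segregatedNorm_eq_sqrt_rescaled {g Δt : ℝ} (hΔt : 0 < Δt) (W : H × H) :
    segregatedNorm g Δt W =
      √((‖W.1‖ / √Δt) ^ 2 + (|g| * √Δt * ‖W.2‖ / 2) ^ 2) := by
  rw [segregatedNorm, div_pow, div_pow, mul_pow, mul_pow, sq_abs, Real.sq_sqrt hΔt.le]
  ring_nf

variable [InnerProductSpace ℝ H]

noncomputable def segregatedForm (g Δt : ℝ) : LinearMap.BilinForm ℝ (H × H) :=
  LinearMap.mk₂ ℝ
    (fun W Φ => (2 / Δt) * ⟪W.1, Φ.1⟫ + g * ⟪W.1, Φ.2⟫ + (g ^ 2 * Δt / 2) * ⟪W.2, Φ.2⟫)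
    (fun W W' Φ => by simp only [Prod.fst_add, Prod.snd_add, inner_add_left]; ring)
    (fun r W Φ => by
      simp only [Prod.smul_fst, Prod.smul_snd, real_inner_smul_left, smul_eq_mul]; ring)
    (fun W Φ Φ' => by simp only [Prod.fst_add, Prod.snd_add, inner_add_right]; ring)
    (fun r W Φ => by
      simp only [Prod.smul_fst, Prod.smul_snd, real_inner_smul_right, smul_eq_mul]; ring)

variable {g Δt : ℝ}

theorem segregatedForm_apply (W Φ : H × H) :
    segregatedForm g Δt W Φ =
      (2 / Δt) * ⟪W.1, Φ.1⟫ + g * ⟪W.1, Φ.2⟫ + (g ^ 2 * Δt / 2) * ⟪W.2, Φ.2⟫ :=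
  rfl

theorem segregatedForm_self (hΔt : 0 < Δt) (W : H × H) :
    segregatedForm g Δt W W =
      segregatedNorm g Δt W ^ 2 + ‖W.1 + (g * Δt / 2) • W.2‖ ^ 2 / Δt := by
  rw [segregatedForm_apply, sq_segregatedNorm hΔt.le, norm_add_sq_real, norm_smul,
    real_inner_smul_right, real_inner_self_eq_norm_sq, real_inner_self_eq_norm_sq, mul_pow,
    Real.norm_eq_abs, sq_abs]
  field_simp
  ring

theorem sq_segregatedNorm_le_segregatedForm_self (hΔt : 0 < Δt) (W : H × H) :
    segregatedNorm g Δt W ^ 2 ≤ segregatedForm g Δt W W := by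
  rw [segregatedForm_self hΔt]
  exact le_add_of_nonneg_right (by positivity)

theorem segregatedForm_le (hΔt : 0 < Δt) (W Φ : H × H) :
    segregatedForm g Δt W Φ ≤ (1 + √5) * segregatedNorm g Δt W * segregatedNorm g Δt Φ := by
  have hinner : g * ⟪W.1, Φ.2⟫ ≤ |g| * (‖W.1‖ * ‖Φ.2‖) := by
    refine (le_abs_self _).trans ?_
    rw [abs_mul]
    gcongr
    exact abs_real_inner_le_norm _ _
  calc segregatedForm g Δt W Φ
      ≤ (2 / Δt) * (‖W.1‖ * ‖Φ.1‖) + |g| * (‖W.1‖ * ‖Φ.2‖)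
          + (g ^ 2 * Δt / 2) * (‖W.2‖ * ‖Φ.2‖) := by
        rw [segregatedForm_apply]
        gcongr
        · exact real_inner_le_norm _ _
        · exact real_inner_le_norm _ _
    _ = 2 * ((‖W.1‖ / √Δt) * (‖Φ.1‖ / √Δt) + (‖W.1‖ / √Δt) * (|g| * √Δt * ‖Φ.2‖ / 2)
          + (|g| * √Δt * ‖W.2‖ / 2) * (|g| * √Δt * ‖Φ.2‖ / 2)) := by
        field_simp
        rw [show √Δt ^ 4 = (√Δt ^ 2) ^ 2 by ring, Real.sq_sqrt hΔt.le, sq_abs]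
        ring
    _ ≤ 2 * (φ * (segregatedNorm g Δt W * segregatedNorm g Δt Φ)) := by
        rw [segregatedNorm_eq_sqrt_rescaled hΔt, segregatedNorm_eq_sqrt_rescaled hΔt]
        gcongr
        exact mul_add_mul_add_mul_le_goldenRatio_mul _ _ _ _
    _ = (1 + √5) * segregatedNorm g Δt W * segregatedNorm g Δt Φ := by
        rw [Real.goldenRatio]
        ring

end Segregated

theorem segregated_quasi_optimality_general
    {H : Type*} [NormedAddCommGroup H] [InnerProductSpace ℝ H]
    (g Δt : ℝ) (hΔt : 0 < Δt)
    (Vh : Submodule ℝ (H × H))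
    (Φ Φh : H × H) (hΦh : Φh ∈ Vh)
    (hGal : ∀ Wh ∈ Vh,
      (2 / Δt) * ⟪Wh.1, (Φ - Φh).1⟫ + g * ⟪Wh.1, (Φ - Φh).2⟫
        + (g ^ 2 * Δt / 2) * ⟪Wh.2, (Φ - Φh).2⟫ = 0) :
    ∀ Wh ∈ Vh,
      Real.sqrt ((1 / Δt) * ‖(Φ - Φh).1‖ ^ 2 + (g ^ 2 * Δt / 4) * ‖(Φ - Φh).2‖ ^ 2) ≤
        (1 + Real.sqrt 5) *
          Real.sqrt ((1 / Δt) * ‖(Φ - Wh).1‖ ^ 2 + (g ^ 2 * Δt / 4) * ‖(Φ - Wh).2‖ ^ 2) :=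
  (segregatedForm g Δt).cea_quasi_optimality (segregatedNorm g Δt) (by positivity)
    (fun _ => Real.sqrt_nonneg _) (sq_segregatedNorm_le_segregatedForm_self hΔt)
    (segregatedForm_le hΔt) hΦh hGal

/-- Quasi-optimality (Cea's estimate) for the segregated free-surface formulation with
`α = 2/Δt`: Galerkin orthogonality implies
`|||Φ − Φʰ|||_s ≤ (1 + √5)·|||Φ − Wʰ|||_s` for all `Wʰ ∈ Vʰ`. -/
theorem segregated_quasi_optimality
    {H : Type*} [NormedAddCommGroup H] [InnerProductSpace ℝ H]
    (g Δt : ℝ) (hg : 0 < g) (hΔt : 0 < Δt)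
    (Vh : Submodule ℝ (H × H))
    (Φ Φh : H × H) (hΦh : Φh ∈ Vh)
    (hGal : ∀ Wh ∈ Vh,
      (2 / Δt) * ⟪Wh.1, (Φ - Φh).1⟫ + g * ⟪Wh.1, (Φ - Φh).2⟫
        + (g ^ 2 * Δt / 2) * ⟪Wh.2, (Φ - Φh).2⟫ = 0) :
    ∀ Wh ∈ Vh,
      Real.sqrt ((1 / Δt) * ‖(Φ - Φh).1‖ ^ 2 + (g ^ 2 * Δt / 4) * ‖(Φ - Φh).2‖ ^ 2) ≤
        (1 + Real.sqrt 5) *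
          Real.sqrt ((1 / Δt) * ‖(Φ - Wh).1‖ ^ 2 + (g ^ 2 * Δt / 4) * ‖(Φ - Wh).2‖ ^ 2) :=
  segregated_quasi_optimality_general g Δt hΔt Vh Φ Φh hΦh hGal
end

section
/- Fix g > 0, Δt > 0 and any α ∈ ℝ. Let φⁿ, φⁿ⁺¹ : ℝ² → ℝ be differentiable with square-integrable gradients on Ω and square-integrable traces on (0,1), and let ηⁿ, ηⁿ⁺¹ : (0,1) → ℝ be square-integrable. Define the midpoint quantities φ^m = (1/2)(φⁿ + φⁿ⁺¹), φₜ^m = (φⁿ⁺¹ − φⁿ)/Δt, η^m = (1/2)(ηⁿ + ηⁿ⁺¹), ηₜ^m = (ηⁿ⁺¹ − ηⁿ)/Δt. If the monolithic midpoint-discretized residual vanishes at the particular test pair w = φₜ^m, v = 2ηₜ^m − (α/g)·φₜ^m, i.e. (∇w, ∇φ^m)_Ω − (w, ηₜ^m)_Γ + (1/2)·(v + (α/g)·w, φₜ^m + g·η^m)_Γ = 0, then the total discrete energy is exactly conserved: (1/2)·‖∇φⁿ⁺¹‖²_Ω + (g/2)·‖ηⁿ⁺¹‖²_Γ = (1/2)·‖∇φⁿ‖²_Ω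 + (g/2)·‖ηⁿ‖²_Γ. -/
open MeasureTheory Real Set

noncomputable section

/-
Testing the midpoint scheme with `w = φₜ^m` turns the interior term into
`(∇(φⁿ⁺¹ - φⁿ), ∇(φⁿ + φⁿ⁺¹))_Ω / (2Δt) = (‖∇φⁿ⁺¹‖²_Ω - ‖∇φⁿ‖²_Ω) / (2Δt)`.
With `v = 2ηₜ^m - (α/g) φₜ^m` the `α`-terms cancel, and the surface terms
`(ηₜ^m, φₜ^m + g η^m)_Γ - (φₜ^m, ηₜ^m)_Γ` leave
`g (ηₜ^m, η^m)_Γ = g (‖ηⁿ⁺¹‖²_Γ - ‖ηⁿ‖²_Γ) / (2Δt)`.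
So the residual is the energy increment divided by `Δt`.
-/

namespace MeasureTheory

variable {X 𝕜 : Type*} {m : MeasurableSpace X} {μ : Measure X} {p q : ENNReal}

lemma MemLp.div_const [NormedDivisionRing 𝕜] {f : X → 𝕜} (hf : MemLp f p μ) (c : 𝕜) :
    MemLp (fun x => f x / c) p μ := by
  simpa only [div_eq_mul_inv] using hf.mul_const c⁻¹

lemma MemLp.integrable_fun_mul [NormedRing 𝕜] {f g : X → 𝕜} (hf : MemLp f p μ)
    (hg : MemLp g q μ) [ENNReal.HolderTriple p q 1] : Integrable (fun x => f x * g x) μ :=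
  hf.integrable_mul hg

end MeasureTheory

section DirectionalDerivative

variable {E : Type*} [NormedAddCommGroup E] [NormedSpace ℝ E] {f h : E → ℝ}

lemma fderiv_sub_div_const_apply (hf : Differentiable ℝ f) (hh : Differentiable ℝ h)
    (c : ℝ) (p v : E) :
    fderiv ℝ (fun q => (f q - h q) / c) p v = (fderiv ℝ f p v - fderiv ℝ h p v) / c := by
  simp only [div_eq_mul_inv]
  rw [fderiv_mul_const ((hf p).fun_sub (hh p)), fderiv_fun_sub (hf p) (hh p)]
  simp [mul_comm]

lemma fderiv_const_mul_add_apply (hf : Differentiable ℝ f) (hh : Differentiable ℝ h)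
    (c : ℝ) (p v : E) :
    fderiv ℝ (fun q => c * (f q + h q)) p v = c * (fderiv ℝ f p v + fderiv ℝ h p v) := by
  rw [fderiv_const_mul ((hf p).fun_add (hh p)), fderiv_fun_add (hf p) (hh p)]
  simp [mul_add]

end DirectionalDerivative

lemma GradL2.integrable_grad_sq {φ : ℝ × ℝ → ℝ} (hφ : GradL2 φ) :
    Integrable (fun p => pdx φ p * pdx φ p + pdz φ p * pdz φ p) (volume.restrict Om) :=
  (hφ.1.integrable_fun_mul hφ.1).add (hφ.2.integrable_fun_mul hφ.2)

lemma ipOm_midpoint {φ₀ φ₁ : ℝ × ℝ → ℝ} (hd₀ : Differentiable ℝ φ₀)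
    (hd₁ : Differentiable ℝ φ₁) (hg₀ : GradL2 φ₀) (hg₁ : GradL2 φ₁) (Δt : ℝ) :
    ipOm (fun p => (φ₁ p - φ₀ p) / Δt) (fun p => 1 / 2 * (φ₀ p + φ₁ p)) =
      (ipOm φ₁ φ₁ - ipOm φ₀ φ₀) / (2 * Δt) := by
  rw [ipOm, ipOm, ipOm, ← integral_sub hg₁.integrable_grad_sq hg₀.integrable_grad_sq,
    ← integral_div]
  refine integral_congr_ae (Filter.Eventually.of_forall fun p => ?_)
  simp only [pdx, pdz, fderiv_sub_div_const_apply hd₁ hd₀,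
    fderiv_const_mul_add_apply hd₀ hd₁]
  ring

lemma ipGa_midpoint {a η₀ η₁ : ℝ → ℝ} (ha : BdryL2 a) (h₀ : BdryL2 η₀)
    (h₁ : BdryL2 η₁) (g Δt : ℝ) :
    1 / 2 * ipGa (fun x => 2 * ((η₁ x - η₀ x) / Δt))
          (fun x => a x + g * (1 / 2 * (η₀ x + η₁ x)))
        - ipGa a (fun x => (η₁ x - η₀ x) / Δt) =
      g * (ipGa η₁ η₁ - ipGa η₀ η₀) / (2 * Δt) := by
  have hηₜ : BdryL2 fun x => (η₁ x - η₀ x) / Δt := (h₁.sub h₀).div_const Δt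
  have hsurface : BdryL2 fun x => a x + g * (1 / 2 * (η₀ x + η₁ x)) :=
    ha.add (((h₀.add h₁).const_mul (1 / 2)).const_mul g)
  have hcoupled := ((hηₜ.const_mul 2).integrable_fun_mul hsurface).const_mul (1 / 2)
  rw [ipGa, ipGa, ipGa, ipGa, ← integral_const_mul,
    ← integral_sub hcoupled (ha.integrable_fun_mul hηₜ),
    ← integral_sub (h₁.integrable_fun_mul h₁) (h₀.integrable_fun_mul h₀),
    ← integral_const_mul, ← integral_div]
  refine integral_congr_ae (Filter.Eventually.of_forall fun x => ?_)
  ring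

theorem monolithic_midpoint_energy_conservation_general
    (g Δt α : ℝ) (hΔt : 0 < Δt)
    (φn φn1 : ℝ × ℝ → ℝ) (ηn ηn1 : ℝ → ℝ)
    (hφn : Differentiable ℝ φn) (hφn1 : Differentiable ℝ φn1)
    (hgφn : GradL2 φn) (hgφn1 : GradL2 φn1)
    (htφn : TraceL2 φn) (htφn1 : TraceL2 φn1)
    (hηn : BdryL2 ηn) (hηn1 : BdryL2 ηn1)
    (hres :
      ipOm (fun p => (φn1 p - φn p) / Δt) (fun p => (1 / 2) * (φn p + φn1 p))
        - ipGa (tr fun p => (φn1 p - φn p) / Δt) (fun x => (ηn1 x - ηn x) / Δt)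
        + (1 / 2) * ipGa
            (fun x => (2 * ((ηn1 x - ηn x) / Δt)
                - (α / g) * tr (fun p => (φn1 p - φn p) / Δt) x)
              + (α / g) * tr (fun p => (φn1 p - φn p) / Δt) x)
            (fun x => tr (fun p => (φn1 p - φn p) / Δt) x
              + g * ((1 / 2) * (ηn x + ηn1 x))) = 0) :
    (1 / 2) * ipOm φn1 φn1 + (g / 2) * ipGa ηn1 ηn1 =
      (1 / 2) * ipOm φn φn + (g / 2) * ipGa ηn ηn := by
  have hK := ipOm_midpoint hφn hφn1 hgφn hgφn1 Δt
  have hP := ipGa_midpoint (a := tr fun p => (φn1 p - φn p) / Δt)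
    ((htφn1.sub htφn).div_const Δt) hηn hηn1 g Δt
  simp only [sub_add_cancel] at hres
  have hincrement :
      (ipOm φn1 φn1 - ipOm φn φn + g * (ipGa ηn1 ηn1 - ipGa ηn ηn)) / (2 * Δt) = 0 := by
    rw [← hres, hK, add_div, ← hP]
    ring
  rcases div_eq_zero_iff.mp hincrement with hzero | hΔt_zero
  · linear_combination hzero / 2
  · linarith

/-- If the monolithic midpoint-discretized residual vanishes at the particular test pair
`w = φₜ^m`, `v = 2ηₜ^m − (α/g)φₜ^m`, then the total discrete energy
`(1/2)‖∇φ‖²_Ω + (g/2)‖η‖²_Γ` is exactly conserved over the time step. -/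
theorem monolithic_midpoint_energy_conservation
    (g Δt α : ℝ) (hg : 0 < g) (hΔt : 0 < Δt)
    (φn φn1 : ℝ × ℝ → ℝ) (ηn ηn1 : ℝ → ℝ)
    (hφn : Differentiable ℝ φn) (hφn1 : Differentiable ℝ φn1)
    (hgφn : GradL2 φn) (hgφn1 : GradL2 φn1)
    (htφn : TraceL2 φn) (htφn1 : TraceL2 φn1)
    (hηn : BdryL2 ηn) (hηn1 : BdryL2 ηn1)
    (hres :
      ipOm (fun p => (φn1 p - φn p) / Δt) (fun p => (1 / 2) * (φn p + φn1 p))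
        - ipGa (tr fun p => (φn1 p - φn p) / Δt) (fun x => (ηn1 x - ηn x) / Δt)
        + (1 / 2) * ipGa
            (fun x => (2 * ((ηn1 x - ηn x) / Δt)
                - (α / g) * tr (fun p => (φn1 p - φn p) / Δt) x)
              + (α / g) * tr (fun p => (φn1 p - φn p) / Δt) x)
            (fun x => tr (fun p => (φn1 p - φn p) / Δt) x
              + g * ((1 / 2) * (ηn x + ηn1 x))) = 0) :
    (1 / 2) * ipOm φn1 φn1 + (g / 2) * ipGa ηn1 ηn1 =
      (1 / 2) * ipOm φn φn + (g / 2) * ipGa ηn ηn :=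
  monolithic_midpoint_energy_conservation_general g Δt α hΔt φn φn1 ηn ηn1 hφn hφn1 hgφn hgφn1 htφn
    htφn1 hηn hηn1 hres
end
end

section
/- Fix g > 0, α ≠ 0. Let φ, φₜ : ℝ² → ℝ be differentiable with ∇φ, ∇φₜ square-integrable on Ω and traces square-integrable on (0,1), and let η, ηₜ, λ : (0,1) → ℝ be square-integrable. Assume (i) the reconstructed Lagrange multiplier identity holds when tested with φₜ: (φₜ, λ)_Γ = −(∇φₜ, ∇φ)_Ω, and (ii) the modified free-surface equations hold weakly: for every square-integrable w : (0,1) → ℝ, (w, φₜ + g·η)_Γ = 0, and for every square-integrable v : (0,1) → ℝ, (v, ηₜ + λ)_Γ = 0 (here φₜ and φ in boundary inner products denote traces). Then total energy is conserved: (∇φₜ, ∇φ)_Ω + g·(η, ηₜ)_Γ = 0. -/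
open MeasureTheory Real Set

noncomputable section

lemma ipGa_comm (a b : ℝ → ℝ) : ipGa a b = ipGa b a := by
  simp only [ipGa, mul_comm]

lemma ipGa_add_right {a b c : ℝ → ℝ}
    (hab : IntegrableOn (fun x => a x * b x) (Ioo 0 1))
    (hac : IntegrableOn (fun x => a x * c x) (Ioo 0 1)) :
    ipGa a (fun x => b x + c x) = ipGa a b + ipGa a c := by
  simp only [ipGa, mul_add]
  exact integral_add hab hac

lemma ipGa_const_mul_right (a b : ℝ → ℝ) (r : ℝ) :
    ipGa a (fun x => r * b x) = r * ipGa a b := by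
  simp only [ipGa, mul_left_comm _ r]
  exact integral_const_mul r _

theorem segregated_LM_reconstruction_energy_conservation_general
    (g : ℝ)
    (φ φt : ℝ × ℝ → ℝ) (η ηt lam : ℝ → ℝ)
    (htφt : TraceL2 φt)
    (hη : BdryL2 η) (hηt : BdryL2 ηt) (hlam : BdryL2 lam)
    (hLM : ipGa (tr φt) lam = - ipOm φt φ)
    (hdyn : ∀ w : ℝ → ℝ, BdryL2 w → ipGa w (fun x => tr φt x + g * η x) = 0)
    (hkin : ∀ v : ℝ → ℝ, BdryL2 v → ipGa v (fun x => ηt x + lam x) = 0) :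
    ipOm φt φ + g * ipGa η ηt = 0 := by
  -- Test the kinematic equation with η and the dynamic one with λ; the two (η, λ)_Γ terms cancel.
  have kin : ipGa η ηt + ipGa η lam = 0 := by
    rw [← ipGa_add_right (MemLp.integrable_mul hη hηt) (MemLp.integrable_mul hη hlam)]
    exact hkin η hη
  have dyn : ipGa lam (tr φt) + g * ipGa lam η = 0 := by
    rw [← ipGa_const_mul_right, ← ipGa_add_right (MemLp.integrable_mul hlam htφt)
      (MemLp.integrable_mul hlam (MemLp.const_mul hη g))]
    exact hdyn lam hlam
  rw [ipGa_comm lam, hLM, ipGa_comm lam] at dyn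
  linear_combination g * kin - dyn

/-- The segregated formulation with Lagrange-multiplier reconstruction recovers exact
energy conservation: if the reconstructed multiplier identity tested with `φₜ` holds and
the modified free-surface equations hold weakly, then
`(∇φₜ,∇φ)_Ω + g(η,ηₜ)_Γ = 0`. -/
theorem segregated_LM_reconstruction_energy_conservation
    (g α : ℝ) (hg : 0 < g) (hα : α ≠ 0)
    (φ φt : ℝ × ℝ → ℝ) (η ηt lam : ℝ → ℝ)
    (hφ : Differentiable ℝ φ) (hφt : Differentiable ℝ φt)
    (hgφ : GradL2 φ) (hgφt : GradL2 φt)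
    (htφ : TraceL2 φ) (htφt : TraceL2 φt)
    (hη : BdryL2 η) (hηt : BdryL2 ηt) (hlam : BdryL2 lam)
    (hLM : ipGa (tr φt) lam = - ipOm φt φ)
    (hdyn : ∀ w : ℝ → ℝ, BdryL2 w → ipGa w (fun x => tr φt x + g * η x) = 0)
    (hkin : ∀ v : ℝ → ℝ, BdryL2 v → ipGa v (fun x => ηt x + lam x) = 0) :
    ipOm φt φ + g * ipGa η ηt = 0 :=
  segregated_LM_reconstruction_energy_conservation_general g φ φt η ηt lam htφt hη hηt hlam hLM hdyn
    hkin
end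
end
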